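/- arXiv:1009.2557 — 2 statements merged into one kernel-verified Lean document; each statement's English description precedes it below -/
import Mathlib

section
/- Let c_1, ..., c_m be real numbers with each c_i in (0,1). If the sum of the c_i is greater than 1, then the equation x = ∏_i ((1 - c_i) + c_i x) has a unique solution in the open interval (0,1). -/
/-!
Writing `(1 - cᵢ) + cᵢ x = 1 - cᵢ (1 - x)` and telescoping the product gives
`∏ᵢ ((1 - cᵢ) + cᵢ x) = 1 - (1 - x) q(x)` with `q(x) = ∑ᵢ cᵢ ∏_{j < i} ((1 - c_j) + c_j x)`,
so for `x ≠ 1` the fixed points are exactly the solutions of `q(x) = 1`. The polynomial `q` is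
strictly increasing on `[0, ∞)` as soon as there are two indices, `q(1) = ∑ᵢ cᵢ > 1` and
`q(0) = 1 - ∏ᵢ (1 - cᵢ) < 1`; the intermediate value theorem does the rest.
-/

open Finset Set

theorem StrictMonoOn.existsUnique_mem_Ioo_eq {α δ : Type*} [ConditionallyCompleteLinearOrder α]
    [TopologicalSpace α] [OrderTopology α] [DenselyOrdered α] [LinearOrder δ]
    [TopologicalSpace δ] [OrderClosedTopology δ] {f : α → δ} {a b : α} {y : δ} (hab : a ≤ b)
    (hcont : ContinuousOn f (Icc a b)) (hmono : StrictMonoOn f (Icc a b)) (ha : f a < y)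
    (hb : y < f b) : ∃! x, x ∈ Ioo a b ∧ f x = y := by
  obtain ⟨x, hx, rfl⟩ := intermediate_value_Ioo hab hcont ⟨ha, hb⟩
  exact ⟨x, ⟨hx, rfl⟩, fun x' ⟨hx', hfx'⟩ =>
    hmono.injOn (Ioo_subset_Icc_self hx') (Ioo_subset_Icc_self hx) hfx'⟩

variable {ι : Type*} [Fintype ι]

theorem nontrivial_of_one_lt_sum {c : ι → ℝ} (hc : ∀ i, c i ≤ 1) (hsum : 1 < ∑ i, c i) :
    Nontrivial ι := by
  by_contra htriv
  have : Subsingleton ι := not_nontrivial_iff_subsingleton.mp htriv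
  have hcard : ∑ i, c i ≤ Fintype.card ι := by
    simpa using Finset.sum_le_sum fun i (_ : i ∈ Finset.univ) => hc i
  have : (Fintype.card ι : ℝ) ≤ 1 := by exact_mod_cast Fintype.card_le_one_iff_subsingleton.mpr this
  linarith

variable [LinearOrder ι]

/-- The secant slope `(∏ i, ((1 - c i) + c i * x) - 1) / (x - 1)`, which is a polynomial in `x`. -/
noncomputable def secantSlope (c : ι → ℝ) (x : ℝ) : ℝ :=
  ∑ i, c i * ∏ j with j < i, ((1 - c j) + c j * x)

theorem prod_eq_one_sub_mul_secantSlope (c : ι → ℝ) (x : ℝ) :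
    ∏ i, ((1 - c i) + c i * x) = 1 - (1 - x) * secantSlope c x := by
  have hfactor : ∀ i, (1 - c i) + c i * x = 1 - c i * (1 - x) := fun i => by ring
  rw [prod_congr rfl fun i _ => hfactor i, prod_one_sub_ordered, secantSlope, mul_sum]
  simp only [← hfactor]
  congr 1
  exact sum_congr rfl fun i _ => by ring

theorem secantSlope_one (c : ι → ℝ) : secantSlope c 1 = ∑ i, c i := by
  simp [secantSlope]

theorem secantSlope_zero_lt_one {c : ι → ℝ} (hc : ∀ i, c i < 1) : secantSlope c 0 < 1 := by
  have hpos : 0 < ∏ i, ((1 - c i) + c i * 0) :=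
    prod_pos fun i _ => by linarith [hc i]
  rw [prod_eq_one_sub_mul_secantSlope] at hpos
  linarith

theorem continuous_secantSlope (c : ι → ℝ) : Continuous (secantSlope c) := by
  unfold secantSlope
  fun_prop

theorem strictMonoOn_secantSlope [Nontrivial ι] {c : ι → ℝ} (hc : ∀ i, c i ∈ Ioo (0 : ℝ) 1) :
    StrictMonoOn (secantSlope c) (Ici 0) := by
  intro x hx y _ hxy
  have hfactor_pos : ∀ j, 0 < (1 - c j) + c j * x := fun j => by
    nlinarith [(hc j).1, (hc j).2, mem_Ici.mp hx]
  have hfactor_lt : ∀ j, (1 - c j) + c j * x < (1 - c j) + c j * y := fun j => by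
    nlinarith [(hc j).1]
  have hprod_le : ∀ i, ∏ j with j < i, ((1 - c j) + c j * x) ≤
      ∏ j with j < i, ((1 - c j) + c j * y) := fun i =>
    prod_le_prod (fun j _ => (hfactor_pos j).le) fun j _ => (hfactor_lt j).le
  obtain ⟨a, b, hab⟩ := exists_pair_lt ι
  refine sum_lt_sum (fun i _ => mul_le_mul_of_nonneg_left (hprod_le i) (hc i).1.le)
    ⟨b, mem_univ b, mul_lt_mul_of_pos_left ?_ (hc b).1⟩
  exact prod_lt_prod (fun j _ => hfactor_pos j) (fun j _ => (hfactor_lt j).le)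
    ⟨a, by simpa using hab, hfactor_lt a⟩

theorem eq_prod_iff_secantSlope_eq_one (c : ι → ℝ) {x : ℝ} (hx : x ≠ 1) :
    x = ∏ i, ((1 - c i) + c i * x) ↔ secantSlope c x = 1 := by
  have hx1 : 1 - x ≠ 0 := sub_ne_zero.mpr hx.symm
  rw [prod_eq_one_sub_mul_secantSlope]
  constructor
  · intro h
    exact (mul_eq_left₀ hx1).mp (by linarith)
  · intro h
    rw [h]
    ring

/-- If `c i ∈ (0,1)` and `∑ c i > 1`, the fixed-point equation
`x = ∏ ((1 - cᵢ) + cᵢ x)` has a unique solution in `(0,1)`. -/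
theorem stmt_0 (m : ℕ) (c : Fin m → ℝ)
    (hc : ∀ i, c i ∈ Set.Ioo (0:ℝ) 1)
    (hsum : 1 < ∑ i, c i) :
    ∃! x : ℝ, x ∈ Set.Ioo (0:ℝ) 1 ∧ x = ∏ i, ((1 - c i) + c i * x) := by
  have : Nontrivial (Fin m) := nontrivial_of_one_lt_sum (fun i => (hc i).2.le) hsum
  rw [existsUnique_congr fun x =>
    and_congr_right fun hx => eq_prod_iff_secantSlope_eq_one c (ne_of_lt (mem_Ioo.mp hx).2)]
  exact StrictMonoOn.existsUnique_mem_Ioo_eq zero_le_one (continuous_secantSlope c).continuousOn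
    ((strictMonoOn_secantSlope hc).mono Icc_subset_Ici_self)
    (secantSlope_zero_lt_one fun i => (hc i).2) (by rwa [secantSlope_one])
end

section
/- Let c_1, ..., c_m be real numbers with each c_i in (0,1). If the sum of the c_i is strictly less than 1, then the equation x = ∏_i ((1 - c_i) + c_i x) has no solution in the open interval (0,1). -/
/-! Substituting `y = 1 - x`, the factors become `1 - cᵢ y`, and the Weierstrass product
inequality gives `∏ (1 - cᵢ y) ≥ 1 - y ∑ cᵢ > 1 - y = x` for `y ∈ (0,1)`. -/

open Finset

theorem one_sub_sum_le_prod_one_sub {ι R : Type*} [CommRing R] [LinearOrder R]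
    [IsStrictOrderedRing R] (s : Finset ι) {f : ι → R} (h0 : ∀ i ∈ s, 0 ≤ f i)
    (h1 : ∀ i ∈ s, f i ≤ 1) :
    1 - ∑ i ∈ s, f i ≤ ∏ i ∈ s, (1 - f i) := by
  classical
  induction s using Finset.induction_on with
  | empty => simp
  | insert a s ha ih =>
    rw [sum_insert ha, prod_insert ha]
    have hfa₀ := h0 a (mem_insert_self a s)
    have hfa₁ := h1 a (mem_insert_self a s)
    have hs := ih (fun i hi => h0 i (mem_insert_of_mem hi))
      (fun i hi => h1 i (mem_insert_of_mem hi))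
    have hsum : 0 ≤ ∑ i ∈ s, f i := sum_nonneg fun i hi => h0 i (mem_insert_of_mem hi)
    calc 1 - (f a + ∑ i ∈ s, f i)
        ≤ (1 - f a) * (1 - ∑ i ∈ s, f i) := by nlinarith [mul_nonneg hfa₀ hsum]
      _ ≤ (1 - f a) * ∏ i ∈ s, (1 - f i) := by gcongr

/-- If `c i ∈ (0,1)` and `∑ c i < 1`, the fixed-point equation
`x = ∏ ((1 - cᵢ) + cᵢ x)` has no solution in `(0,1)`. -/
theorem stmt_1 (m : ℕ) (c : Fin m → ℝ)
    (hc : ∀ i, c i ∈ Set.Ioo (0:ℝ) 1)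
    (hsum : ∑ i, c i < 1) :
    ¬ ∃ x : ℝ, x ∈ Set.Ioo (0:ℝ) 1 ∧ x = ∏ i, ((1 - c i) + c i * x) := by
  rintro ⟨x, ⟨hx₀, hx₁⟩, hfix⟩
  have hbound := one_sub_sum_le_prod_one_sub univ (f := fun i => c i * (1 - x))
    (fun i _ => mul_nonneg (hc i).1.le (by linarith))
    (fun i _ => by nlinarith [(hc i).1, (hc i).2])
  have hprod : ∏ i, (1 - c i * (1 - x)) = x := by
    conv_rhs => rw [hfix]
    exact prod_congr rfl fun i _ => by ring
  rw [← sum_mul, hprod] at hbound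
  nlinarith [mul_pos (sub_pos.2 hx₁) (sub_pos.2 hsum)]
end
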